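/- arXiv:1201.3142 — 3 statements merged into one kernel-verified Lean document; each statement's English description precedes it below -/
import Mathlib

section
/- The minimum of 1 + z + 2*x*y − x*z subject to 0.25 + x*y ≤ x and x,y,z ∈ [0,1] is exactly 1, and the maximum is exactly 5/2. -/
/-! Writing `E = 1 + z (1 - x) + 2 x y`, both terms after the `1` are nonnegative on the cube, so
`E ≥ 1`, attained at `(1/4, 0, 0)`. For the maximum, `z (1 - x) ≤ 1 - x` and the constraint gives
`2 x y ≤ 2 x - 1/2`, so `E ≤ 3/2 + x ≤ 5/2`, attained at `(1, 3/4, 0)`. -/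

section Objective

variable {x y z : ℝ}

theorem one_le_objective (hx0 : 0 ≤ x) (hx1 : x ≤ 1) (hy0 : 0 ≤ y) (hz0 : 0 ≤ z) :
    1 ≤ 1 + z + 2 * x * y - x * z := by
  have hzx : 0 ≤ z * (1 - x) := mul_nonneg hz0 (sub_nonneg.mpr hx1)
  have hxy : 0 ≤ x * y := mul_nonneg hx0 hy0
  linarith

theorem objective_le_five_halves (hx1 : x ≤ 1) (hz1 : z ≤ 1) (hc : 1 / 4 + x * y ≤ x) :
    1 + z + 2 * x * y - x * z ≤ 5 / 2 := by
  have hzx : z * (1 - x) ≤ 1 - x := mul_le_of_le_one_left (sub_nonneg.mpr hx1) hz1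
  calc 1 + z + 2 * x * y - x * z = 1 + z * (1 - x) + 2 * (x * y) := by ring
    _ ≤ 1 + (1 - x) + 2 * (x - 1 / 4) := by gcongr; linarith
    _ = 3 / 2 + x := by ring
    _ ≤ 5 / 2 := by linarith

end Objective

theorem stmt5 :
    IsLeast {E : ℝ | ∃ x y z : ℝ, 0 ≤ x ∧ x ≤ 1 ∧ 0 ≤ y ∧ y ≤ 1 ∧
      0 ≤ z ∧ z ≤ 1 ∧ 0.25 + x * y ≤ x ∧
      E = 1 + z + 2 * x * y - x * z} 1 ∧
    IsGreatest {E : ℝ | ∃ x y z : ℝ, 0 ≤ x ∧ x ≤ 1 ∧ 0 ≤ y ∧ y ≤ 1 ∧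
      0 ≤ z ∧ z ≤ 1 ∧ 0.25 + x * y ≤ x ∧
      E = 1 + z + 2 * x * y - x * z} (5 / 2) := by
  refine ⟨⟨⟨1 / 4, 0, 0, by norm_num⟩, ?_⟩, ⟨⟨1, 3 / 4, 0, by norm_num⟩, ?_⟩⟩
  · rintro E ⟨x, y, z, hx0, hx1, hy0, -, hz0, -, -, rfl⟩
    exact one_le_objective hx0 hx1 hy0 hz0
  · rintro E ⟨x, y, z, -, hx1, -, -, -, hz1, hc, rfl⟩
    exact objective_le_five_halves hx1 hz1 (by linarith)
end

section
/- The maximum value of z subject to: x₁+…+x₈ = 1, xᵢ ∈ [0,1], z ∈ [0,1], x₁+x₂ ≥ z, x₂+x₃+x₄ ≥ z, x₁+x₃+x₅ ≥ z, is exactly 2/3. -/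
theorem stmt14 :
    IsGreatest {z : ℝ | ∃ x1 x2 x3 x4 x5 x6 x7 x8 : ℝ,
      x1 + x2 + x3 + x4 + x5 + x6 + x7 + x8 = 1 ∧
      (0 ≤ x1 ∧ x1 ≤ 1) ∧ (0 ≤ x2 ∧ x2 ≤ 1) ∧ (0 ≤ x3 ∧ x3 ≤ 1) ∧
      (0 ≤ x4 ∧ x4 ≤ 1) ∧ (0 ≤ x5 ∧ x5 ≤ 1) ∧ (0 ≤ x6 ∧ x6 ≤ 1) ∧
      (0 ≤ x7 ∧ x7 ≤ 1) ∧ (0 ≤ x8 ∧ x8 ≤ 1) ∧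
      (0 ≤ z ∧ z ≤ 1) ∧
      x1 + x2 ≥ z ∧ x2 + x3 + x4 ≥ z ∧ x1 + x3 + x5 ≥ z} (2 / 3) := by
  constructor
  · exact ⟨1 / 3, 1 / 3, 1 / 3, 0, 0, 0, 0, 0, by norm_num⟩
  · rintro z ⟨x1, x2, x3, x4, x5, x6, x7, x8, hsum, -, -, -, ⟨hx4, -⟩, ⟨hx5, -⟩, ⟨hx6, -⟩,
      ⟨hx7, -⟩, ⟨hx8, -⟩, -, hz12, hz234, hz135⟩
    -- Summing the three constraints counts each of x1, x2, x3 twice and x4, x5 once,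
    -- so 3z ≤ 2 (x1 + ⋯ + x8) = 2.
    linarith
end

section
/- The maximum of x₁+x₃ subject to x₁+…+x₈ = 1, xᵢ ∈ [0,1], x₁+x₂ ≥ 2/3, x₂+x₃+x₄ ≥ 2/3, x₁+x₃+x₅ ≥ 2/3, is exactly 2/3. -/
theorem stmt15 :
    IsGreatest {v : ℝ | ∃ x1 x2 x3 x4 x5 x6 x7 x8 : ℝ,
      x1 + x2 + x3 + x4 + x5 + x6 + x7 + x8 = 1 ∧
      (0 ≤ x1 ∧ x1 ≤ 1) ∧ (0 ≤ x2 ∧ x2 ≤ 1) ∧ (0 ≤ x3 ∧ x3 ≤ 1) ∧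
      (0 ≤ x4 ∧ x4 ≤ 1) ∧ (0 ≤ x5 ∧ x5 ≤ 1) ∧ (0 ≤ x6 ∧ x6 ≤ 1) ∧
      (0 ≤ x7 ∧ x7 ≤ 1) ∧ (0 ≤ x8 ∧ x8 ≤ 1) ∧
      x1 + x2 ≥ 2 / 3 ∧ x2 + x3 + x4 ≥ 2 / 3 ∧ x1 + x3 + x5 ≥ 2 / 3 ∧
      v = x1 + x3} (2 / 3) := by
  refine ⟨⟨1 / 3, 1 / 3, 1 / 3, 0, 0, 0, 0, 0, by norm_num⟩, ?_⟩
  rintro v ⟨x1, x2, x3, x4, x5, x6, x7, x8, hsum, -, -, -, ⟨hx4, -⟩, ⟨hx5, -⟩, ⟨hx6, -⟩,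
    ⟨hx7, -⟩, ⟨hx8, -⟩, hx12, hx234, -, rfl⟩
  -- x₁ lies outside the block x₂ + x₃ + x₄ of mass ≥ 2/3, and x₃ outside x₁ + x₂.
  have hx1 : x1 ≤ 1 / 3 := by linarith
  have hx3 : x3 ≤ 1 / 3 := by linarith
  linarith
end
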